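/- arXiv:2210.08087 — 3 statements merged into one kernel-verified Lean document; each statement's English description precedes it below -/
import Mathlib

section
/- If in addition k(x, x) ≤ 1 for every x ∈ X, then the cumulative regularized posterior variance is bounded by the information gain: Σ_{s=1}^t σ_{s−1}²(x_s) ≤ (1 + 2λ) · (1/2) · log det(I_t + λ⁻¹ K_t). -/
open Matrix

/-- Gram matrix of the first `s` points `xs 0, …, xs (s-1)`. -/
noncomputable def gram {X : Type*} (k : X → X → ℝ) (xs : ℕ → X) (s : ℕ) :
    Matrix (Fin s) (Fin s) ℝ :=
  Matrix.of fun i j => k (xs i) (xs j)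

/-- Kernel vector `k_s(x) = (k(x_1,x), …, k(x_s,x))`. -/
noncomputable def kvec {X : Type*} (k : X → X → ℝ) (xs : ℕ → X) (s : ℕ) (x : X) :
    Fin s → ℝ :=
  fun i => k (xs i) x

/-- Regularized posterior covariance
`σ_s(x,x') = k(x,x') − k_s(x)ᵀ (K_s + λ I_s)⁻¹ k_s(x')`. -/
noncomputable def postCov {X : Type*} (k : X → X → ℝ) (xs : ℕ → X) (lam : ℝ) (s : ℕ)
    (x x' : X) : ℝ :=
  k x x' -
    kvec k xs s x ⬝ᵥ ((gram k xs s + lam • (1 : Matrix (Fin s) (Fin s) ℝ))⁻¹ *ᵥ kvec k xs s x')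

/-- Regularized posterior variance `σ_s²(x) = σ_s(x,x)`. -/
noncomputable def postVar {X : Type*} (k : X → X → ℝ) (xs : ℕ → X) (lam : ℝ) (s : ℕ)
    (x : X) : ℝ :=
  postCov k xs lam s x x

/-! Reindexed as a block matrix with `K_s + λ I` in the corner, `K_{s+1} + λ I` has Schur
complement `λ + σ_s²(x_{s+1})`, so `det (I + λ⁻¹ K_t) = ∏_s (1 + σ_s²(x_{s+1}) / λ)`. The same
complement without the `λ` belongs to the PSD matrix `K_{s+1} + λ diag(I_s, 0)`, whence `0 ≤ σ²`;
also `σ² ≤ k(x, x) ≤ 1`. On `[0, 1]` the Padé bound `log (1 + z) ≥ 2z / (2 + z)` gives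
`σ² ≤ (1 + 2λ) · ½ log (1 + σ² / λ)`, and the theorem is the sum of these bounds. -/

theorem le_mul_half_log_one_add_inv_mul {lam u : ℝ} (hlam : 0 < lam) (hu₀ : 0 ≤ u)
    (hu₁ : u ≤ 1) : u ≤ (1 + 2 * lam) * ((1 / 2) * Real.log (1 + lam⁻¹ * u)) := by
  have hpade := Real.le_log_one_add_of_nonneg (mul_nonneg (inv_nonneg.2 hlam.le) hu₀)
  calc u ≤ (1 + 2 * lam) * ((1 / 2) * (2 * (lam⁻¹ * u) / (lam⁻¹ * u + 2))) := by
        rw [show (1 + 2 * lam) * ((1 / 2) * (2 * (lam⁻¹ * u) / (lam⁻¹ * u + 2)))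
            = (1 + 2 * lam) * u / (u + 2 * lam) by field_simp, le_div_iff₀ (by positivity)]
        nlinarith
    _ ≤ (1 + 2 * lam) * ((1 / 2) * Real.log (1 + lam⁻¹ * u)) := by gcongr

theorem conjTranspose_replicateCol_real {ι m : Type*} (v : m → ℝ) :
    (replicateCol ι v)ᴴ = replicateRow ι v := by
  rw [conjTranspose_replicateCol, star_trivial]

theorem Matrix.PosSemidef.fromBlocks_add_smul_one₁₁ {m n : Type*} [Fintype m] [DecidableEq m]
    [Fintype n] [DecidableEq n] {G : Matrix m m ℝ} {B : Matrix m n ℝ} {D : Matrix n n ℝ}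
    (h : (fromBlocks G B Bᴴ D).PosSemidef) {lam : ℝ} (hlam : 0 ≤ lam) :
    (fromBlocks (G + lam • 1) B Bᴴ D).PosSemidef := by
  have hdiag : (fromBlocks (lam • 1 : Matrix m m ℝ) 0 0 (0 : Matrix n n ℝ)).PosSemidef := by
    rw [smul_one_eq_diagonal, ← diagonal_zero, fromBlocks_diagonal, posSemidef_diagonal_iff]
    rintro (i | i) <;> simp [hlam]
  simpa [fromBlocks_add] using h.add hdiag

def KernelPosSemidef {X : Type*} (k : X → X → ℝ) : Prop :=
  ∀ (n : ℕ) (y : Fin n → X), (Matrix.of fun i j => k (y i) (y j)).PosSemidef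

noncomputable def regGram {X : Type*} (k : X → X → ℝ) (xs : ℕ → X) (lam : ℝ) (s : ℕ) :
    Matrix (Fin s) (Fin s) ℝ :=
  gram k xs s + lam • (1 : Matrix (Fin s) (Fin s) ℝ)

section

variable {X : Type*} {k : X → X → ℝ} {xs : ℕ → X} {lam : ℝ}

theorem postVar_eq (s : ℕ) (x : X) :
    postVar k xs lam s x = k x x - kvec k xs s x ⬝ᵥ ((regGram k xs lam s)⁻¹ *ᵥ kvec k xs s x) :=
  rfl

theorem posDef_regGram (hk : KernelPosSemidef k) (hlam : 0 < lam) (s : ℕ) :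
    (regGram k xs lam s).PosDef :=
  PosDef.posSemidef_add (hk s fun i => xs i) (PosDef.one.smul hlam)

theorem postVar_le_self (hk : KernelPosSemidef k) (hlam : 0 < lam) (s : ℕ) (x : X) :
    postVar k xs lam s x ≤ k x x := by
  rw [postVar_eq, sub_le_self_iff]
  simpa using (posDef_regGram hk hlam s).inv.posSemidef.dotProduct_mulVec_nonneg (kvec k xs s x)

theorem replicateRow_mul_inv_regGram_mul_replicateCol (s : ℕ) (x : X) :
    replicateRow (Fin 1) (kvec k xs s x) * (regGram k xs lam s)⁻¹ *
        replicateCol (Fin 1) (kvec k xs s x) =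
      of fun _ _ => k x x - postVar k xs lam s x := by
  rw [Matrix.mul_assoc, ← replicateCol_mulVec, replicateRow_mul_replicateCol, postVar_eq,
    sub_sub_cancel]

theorem gram_succ_submatrix_finSumFinEquiv (hsymm : ∀ x y, k x y = k y x) (s : ℕ) :
    (gram k xs (s + 1)).submatrix finSumFinEquiv finSumFinEquiv =
      fromBlocks (gram k xs s) (replicateCol (Fin 1) (kvec k xs s (xs s)))
        (replicateRow (Fin 1) (kvec k xs s (xs s))) (of fun _ _ => k (xs s) (xs s)) := by
  ext (i | i) (j | j) <;> simp [_root_.gram, kvec, hsymm, Fin.fin_one_eq_zero]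

theorem regGram_succ_submatrix_finSumFinEquiv (hsymm : ∀ x y, k x y = k y x) (s : ℕ) :
    (regGram k xs lam (s + 1)).submatrix finSumFinEquiv finSumFinEquiv =
      fromBlocks (regGram k xs lam s) (replicateCol (Fin 1) (kvec k xs s (xs s)))
        (replicateRow (Fin 1) (kvec k xs s (xs s))) (of fun _ _ => k (xs s) (xs s) + lam) := by
  rw [regGram, submatrix_add, submatrix_smul, Pi.add_apply, Pi.add_apply, Pi.smul_apply,
    Pi.smul_apply, submatrix_one_equiv, gram_succ_submatrix_finSumFinEquiv hsymm, ← fromBlocks_one,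
    fromBlocks_smul, fromBlocks_add]
  congr 1 <;> ext i j <;> simp [Fin.fin_one_eq_zero]

theorem postVar_nonneg (hsymm : ∀ x y, k x y = k y x) (hk : KernelPosSemidef k) (hlam : 0 < lam)
    (s : ℕ) : 0 ≤ postVar k xs lam s (xs s) := by
  have := (posDef_regGram (xs := xs) hk hlam s).isUnit.invertible
  have hblock := (posSemidef_submatrix_equiv finSumFinEquiv).mpr (hk (s + 1) fun i => xs i)
  change ((gram k xs (s + 1)).submatrix _ _).PosSemidef at hblock
  rw [gram_succ_submatrix_finSumFinEquiv hsymm, ← conjTranspose_replicateCol_real] at hblock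
  have hschur := (PosDef.fromBlocks₁₁ _ _ (posDef_regGram hk hlam s)).mp
    (hblock.fromBlocks_add_smul_one₁₁ hlam.le)
  rw [conjTranspose_replicateCol_real, replicateRow_mul_inv_regGram_mul_replicateCol] at hschur
  simpa using hschur.diag_nonneg (i := 0)

theorem det_regGram_succ (hsymm : ∀ x y, k x y = k y x) (hk : KernelPosSemidef k)
    (hlam : 0 < lam) (s : ℕ) :
    (regGram k xs lam (s + 1)).det =
      (regGram k xs lam s).det * (lam + postVar k xs lam s (xs s)) := by
  have := (posDef_regGram (xs := xs) hk hlam s).isUnit.invertible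
  rw [← det_submatrix_equiv_self finSumFinEquiv, regGram_succ_submatrix_finSumFinEquiv hsymm,
    det_fromBlocks₁₁, invOf_eq_nonsing_inv, replicateRow_mul_inv_regGram_mul_replicateCol,
    det_fin_one]
  simp only [Matrix.sub_apply, of_apply]
  ring

theorem det_regGram (hsymm : ∀ x y, k x y = k y x) (hk : KernelPosSemidef k) (hlam : 0 < lam)
    (t : ℕ) :
    (regGram k xs lam t).det = ∏ s ∈ Finset.range t, (lam + postVar k xs lam s (xs s)) := by
  induction t with
  | zero => simp
  | succ t ih => rw [det_regGram_succ hsymm hk hlam, ih, Finset.prod_range_succ]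

theorem det_one_add_inv_smul_gram (hsymm : ∀ x y, k x y = k y x) (hk : KernelPosSemidef k)
    (hlam : 0 < lam) (t : ℕ) :
    (1 + lam⁻¹ • gram k xs t).det =
      ∏ s ∈ Finset.range t, (1 + lam⁻¹ * postVar k xs lam s (xs s)) := by
  have hscale : 1 + lam⁻¹ • gram k xs t = lam⁻¹ • regGram k xs lam t := by
    rw [regGram, smul_add, smul_smul, inv_mul_cancel₀ hlam.ne', one_smul, add_comm]
  rw [hscale, det_smul, det_regGram hsymm hk hlam, Fintype.card_fin]
  nth_rw 1 [← Finset.card_range t]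
  rw [Finset.pow_card_mul_prod]
  refine Finset.prod_congr rfl fun s _ => ?_
  rw [mul_add, inv_mul_cancel₀ hlam.ne']

end

/-- If in addition `k(x,x) ≤ 1` for all `x`, the cumulative regularized posterior variance is
bounded by the information gain:
`Σ_{s=1}^t σ_{s−1}²(x_s) ≤ (1 + 2λ) · (1/2) · log det(I_t + λ⁻¹ K_t)`. -/
theorem sum_postVar_le_infoGain {X : Type*} (k : X → X → ℝ)
    (hsymm : ∀ x y, k x y = k y x)
    (hpsd : ∀ (n : ℕ) (y : Fin n → X), (Matrix.of fun i j => k (y i) (y j)).PosSemidef)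
    (hbdd : ∀ x, k x x ≤ 1)
    (lam : ℝ) (hlam : 0 < lam)
    (t : ℕ) (xs : ℕ → X) :
    ∑ s ∈ Finset.range t, postVar k xs lam s (xs s)
      ≤ (1 + 2 * lam) * ((1 / 2) * Real.log ((1 + lam⁻¹ • gram k xs t).det)) := by
  have hvar : ∀ s, 0 ≤ postVar k xs lam s (xs s) ∧ postVar k xs lam s (xs s) ≤ 1 := fun s =>
    ⟨postVar_nonneg hsymm hpsd hlam s, (postVar_le_self hpsd hlam s (xs s)).trans (hbdd _)⟩
  have hpos : ∀ s ∈ Finset.range t, 1 + lam⁻¹ * postVar k xs lam s (xs s) ≠ 0 := fun s _ =>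
    (add_pos_of_pos_of_nonneg one_pos (mul_nonneg (inv_nonneg.2 hlam.le) (hvar s).1)).ne'
  rw [det_one_add_inv_smul_gram hsymm hpsd hlam, Real.log_prod hpos, Finset.mul_sum,
    Finset.mul_sum]
  exact Finset.sum_le_sum fun s _ =>
    le_mul_half_log_one_add_inv_mul hlam (hvar s).1 (hvar s).2
end

section
/- Let (Ω, F, ℙ) be a probability space with a filtration (F_m)_{m ∈ ℕ}, and let (Δ_m)_{m ≥ 1} be a sequence of real random variables such that Δ_m is F_m-measurable and 0 ≤ Δ_m ≤ B almost surely for every m, where B ≥ 1 is a real constant. Then for every δ ∈ (0, 1), with probability at least 1 − δ, simultaneously for all M ≥ 1: Σ_{m=1}^M E[Δ_m | F_{m−1}] ≤ 2 · Σ_{m=1}^M Δ_m + 4B · log(1/δ) + 8B · log(4B) + 1, where log is the natural logarithm. -/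
/-!
With `λ = 1 / (2B)`, the process `Z_M = exp (λ ∑_{m ≤ M} (E[Δ_m | F_{m-1}] - 2 Δ_m))` is a
nonnegative supermartingale with `Z_0 = 1`. The one-step bound comes from
`exp (-t) ≤ 1 - t / 2 ≤ exp (-t / 2)` for `t ∈ [0, 1]`: applied to `t = Δ_m / B` and
conditioned, it gives `E[exp (-Δ_m / B) | F_{m-1}] ≤ exp (-λ E[Δ_m | F_{m-1}])`.
By Ville's inequality `Z` ever reaches `1/δ` with probability at most `δ`, and as long as it
stays below `1/δ` we have `∑ E[Δ_m | F_{m-1}] < 2 ∑ Δ_m + 2B log (1/δ)`, which is stronger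
than the claim.
-/

open MeasureTheory Finset

namespace MeasureTheory.Supermartingale

variable {Ω : Type*} {m0 : MeasurableSpace Ω} {μ : Measure Ω} [IsFiniteMeasure μ]
  {F : Filtration ℕ m0} {Z : ℕ → Ω → ℝ}

theorem mul_measureReal_exists_le_le_integral (hZ : Supermartingale Z F μ) (hnonneg : 0 ≤ Z)
    (c : ℝ) (n : ℕ) :
    c * μ.real {ω | ∃ k ≤ n, c ≤ Z k ω} ≤ ∫ ω, Z 0 ω ∂μ := by
  set τ : Ω → WithTop ℕ := fun ω => (hittingBtwn Z (Set.Ici c) 0 n ω : ℕ)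
  have hτ : IsStoppingTime F τ :=
    hZ.stronglyAdapted.adapted.isStoppingTime_hittingBtwn measurableSet_Ici
  have hτ_le : ∀ ω, τ ω ≤ n := fun ω => WithTop.coe_le_coe.2 (hittingBtwn_le ω)
  have hint : Integrable (stoppedValue Z τ) μ :=
    integrable_stoppedValue ℕ hτ hZ.integrable hτ_le
  have hmeas : MeasurableSet {ω | ∃ k ≤ n, c ≤ Z k ω} := by
    simp only [Set.ofPred_exists]
    exact .iUnion fun k => (MeasurableSet.const (k ≤ n)).inter <|
      measurableSet_le measurable_const ((hZ.stronglyMeasurable k).mono (F.le k)).measurable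
  have hc_le : ∀ ω ∈ {ω | ∃ k ≤ n, c ≤ Z k ω}, c ≤ stoppedValue Z τ ω :=
    fun ω ⟨k, hk, hck⟩ => stoppedValue_hittingBtwn_mem ⟨k, ⟨Nat.zero_le _, hk⟩, hck⟩
  have hoptional : ∫ ω, stoppedValue Z τ ω ∂μ ≤ ∫ ω, Z 0 ω ∂μ := by
    have := hZ.neg.expected_stoppedValue_mono (isStoppingTime_const F 0) hτ
      (fun ω => WithTop.coe_le_coe.2 (Nat.zero_le _)) hτ_le
    simpa [stoppedValue, integral_neg] using this
  calc c * μ.real {ω | ∃ k ≤ n, c ≤ Z k ω}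
      ≤ ∫ ω in {ω | ∃ k ≤ n, c ≤ Z k ω}, stoppedValue Z τ ω ∂μ :=
        setIntegral_ge_of_const_le_real hmeas (measure_ne_top _ _) hc_le hint.integrableOn
    _ ≤ ∫ ω, stoppedValue Z τ ω ∂μ :=
        setIntegral_le_integral hint (.of_forall fun ω => hnonneg _ _)
    _ ≤ ∫ ω, Z 0 ω ∂μ := hoptional

/-- **Ville's inequality** for nonnegative supermartingales. -/
theorem mul_measure_exists_le_le_integral (hZ : Supermartingale Z F μ) (hnonneg : 0 ≤ Z)
    {c : ℝ} (hc : 0 ≤ c) :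
    ENNReal.ofReal c * μ {ω | ∃ k, c ≤ Z k ω} ≤ ENNReal.ofReal (∫ ω, Z 0 ω ∂μ) := by
  have hunion : {ω | ∃ k, c ≤ Z k ω} = ⋃ n, {ω | ∃ k ≤ n, c ≤ Z k ω} := by
    ext ω
    simp only [Set.mem_ofPred_eq, Set.mem_iUnion]
    exact ⟨fun ⟨k, hk⟩ => ⟨k, k, le_rfl, hk⟩, fun ⟨_, k, _, hk⟩ => ⟨k, hk⟩⟩
  have hmono : Monotone fun n => {ω | ∃ k ≤ n, c ≤ Z k ω} :=
    fun _ _ hab _ ⟨k, hk, hck⟩ => ⟨k, hk.trans hab, hck⟩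
  rw [hunion, hmono.directed_le.measure_iUnion, ENNReal.mul_iSup]
  refine iSup_le fun n => ?_
  rw [← ofReal_measureReal, ← ENNReal.ofReal_mul hc]
  exact ENNReal.ofReal_le_ofReal (hZ.mul_measureReal_exists_le_le_integral hnonneg c n)

end MeasureTheory.Supermartingale

lemma Real.exp_neg_le_one_sub_half {t : ℝ} (h0 : 0 ≤ t) (h1 : t ≤ 1) :
    Real.exp (-t) ≤ 1 - t / 2 := by
  rw [Real.exp_neg, inv_le_iff_one_le_mul₀ (Real.exp_pos t)]
  nlinarith [Real.add_one_le_exp t]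

section CondExp

variable {Ω : Type*} {m m0 : MeasurableSpace Ω} {μ : Measure Ω} [IsFiniteMeasure μ]

lemma integrable_exp_neg_div {X : Ω → ℝ} {B : ℝ} (hB : 0 ≤ B)
    (hX : AEStronglyMeasurable X μ) (hX0 : 0 ≤ᵐ[μ] X) :
    Integrable (fun ω => Real.exp (-(X ω / B))) μ :=
  Integrable.of_bound (by fun_prop) 1 <| by
    filter_upwards [hX0] with ω h
    rw [Real.norm_eq_abs, abs_of_pos (Real.exp_pos _), Real.exp_le_one_iff, neg_nonpos]
    exact div_nonneg h hB

theorem condExp_exp_neg_div_le {X : Ω → ℝ} {B : ℝ} (hB : 0 < B) (hm : m ≤ m0)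
    (hX : AEStronglyMeasurable X μ) (hbdd : ∀ᵐ ω ∂μ, 0 ≤ X ω ∧ X ω ≤ B) :
    μ[fun ω => Real.exp (-(X ω / B)) | m] ≤ᵐ[μ]
      fun ω => Real.exp (-(μ[X | m] ω / (2 * B))) := by
  have hXint : Integrable X μ := Integrable.of_bound hX B <| by
    filter_upwards [hbdd] with ω h
    rw [Real.norm_eq_abs, abs_le]
    constructor <;> linarith [h.1, h.2]
  have hlin :
      μ[fun ω => 1 - X ω / (2 * B) | m] =ᵐ[μ] fun ω => 1 - μ[X | m] ω / (2 * B) := by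
    have : (fun ω => 1 - X ω / (2 * B)) = (fun _ => (1 : ℝ)) - (2 * B)⁻¹ • X := by
      ext; simp [div_eq_inv_mul]
    rw [this]
    filter_upwards [condExp_sub (integrable_const 1) (hXint.smul (2 * B)⁻¹) m,
      condExp_smul (μ := μ) (2 * B)⁻¹ X m] with ω h1 h2
    rw [h1, Pi.sub_apply, h2, condExp_const hm]
    simp [div_eq_inv_mul]
  have hmono :
      μ[fun ω => Real.exp (-(X ω / B)) | m] ≤ᵐ[μ] μ[fun ω => 1 - X ω / (2 * B) | m] := by
    refine condExp_mono (integrable_exp_neg_div hB.le hX (hbdd.mono fun _ h => h.1))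
      ((integrable_const 1).sub (hXint.div_const _)) ?_
    filter_upwards [hbdd] with ω h
    have := Real.exp_neg_le_one_sub_half (div_nonneg h.1 hB.le) ((div_le_one hB).2 h.2)
    rwa [div_div, mul_comm B] at this
  filter_upwards [hmono, hlin] with ω h1 h2
  rw [h2] at h1
  exact h1.trans (Real.one_sub_le_exp_neg _)

end CondExp

section CompensatedSum

variable {Ω : Type*} {m0 : MeasurableSpace Ω} {μ : Measure Ω} {F : Filtration ℕ m0}
  {Δ : ℕ → Ω → ℝ} {B : ℝ}

variable (μ F Δ B) in
noncomputable def expCompensatedSum (M : ℕ) (ω : Ω) : ℝ :=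
  Real.exp ((∑ m ∈ Icc 1 M, (μ[Δ m | F (m - 1)] ω - 2 * Δ m ω)) / (2 * B))

lemma expCompensatedSum_pos (M : ℕ) (ω : Ω) : 0 < expCompensatedSum μ F Δ B M ω :=
  Real.exp_pos _

lemma expCompensatedSum_zero : expCompensatedSum μ F Δ B 0 = 1 := by
  ext ω
  simp [expCompensatedSum]

lemma expCompensatedSum_succ (M : ℕ) (ω : Ω) :
    expCompensatedSum μ F Δ B (M + 1) ω = expCompensatedSum μ F Δ B M ω *
      Real.exp (μ[Δ (M + 1) | F M] ω / (2 * B)) * Real.exp (-(Δ (M + 1) ω / B)) := by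
  simp only [expCompensatedSum, ← Real.exp_add]
  rw [sum_Icc_succ_top (by omega), Nat.add_sub_cancel,
    ← mul_div_mul_left (Δ (M + 1) ω) B two_ne_zero]
  ring_nf

lemma sum_condExp_lt_of_expCompensatedSum_lt (hB : 0 < B) {M : ℕ} {ω : Ω} {r : ℝ} (hr : 0 < r)
    (h : expCompensatedSum μ F Δ B M ω < r) :
    ∑ m ∈ Icc 1 M, μ[Δ m | F (m - 1)] ω <
      2 * ∑ m ∈ Icc 1 M, Δ m ω + 2 * B * Real.log r := by
  rw [expCompensatedSum, ← Real.lt_log_iff_exp_lt hr, div_lt_iff₀ (by positivity),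
    sum_sub_distrib, ← mul_sum] at h
  linarith

lemma stronglyAdapted_expCompensatedSum
    (hadapted : ∀ m, 1 ≤ m → StronglyMeasurable[F m] (Δ m)) :
    StronglyAdapted F (expCompensatedSum μ F Δ B) := fun M => by
  have hterm : ∀ m ∈ Icc 1 M,
      StronglyMeasurable[F M] fun ω => μ[Δ m | F (m - 1)] ω - 2 * Δ m ω := by
    intro m hm
    obtain ⟨h1, hM⟩ := mem_Icc.1 hm
    exact (stronglyMeasurable_condExp.mono (F.mono (by omega))).sub
      (((hadapted m h1).mono (F.mono hM)).const_mul 2)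
  exact (Real.continuous_exp.comp (continuous_id.div_const _)).comp_stronglyMeasurable
    (Finset.stronglyMeasurable_fun_sum _ hterm)

lemma ae_expCompensatedSum_le_exp (hB : 0 < B)
    (hbdd : ∀ m, 1 ≤ m → ∀ᵐ ω ∂μ, 0 ≤ Δ m ω ∧ Δ m ω ≤ B) (M : ℕ) :
    ∀ᵐ ω ∂μ, expCompensatedSum μ F Δ B M ω ≤ Real.exp (M / 2) := by
  have hterm : ∀ᵐ ω ∂μ, ∀ m ∈ Icc 1 M, μ[Δ m | F (m - 1)] ω - 2 * Δ m ω ≤ B := by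
    refine Filter.eventually_all_finset _ |>.2 fun m hm => ?_
    have hΔ := hbdd m (mem_Icc.1 hm).1
    filter_upwards [hΔ, condExp_le_nonneg_const (m := F (m - 1)) hB.le (hΔ.mono fun _ h => h.2)]
      with ω h hE
    linarith [h.1]
  filter_upwards [hterm] with ω h
  refine Real.exp_le_exp.2 <|
    (div_le_div_of_nonneg_right (sum_le_sum h) (by positivity)).trans_eq ?_
  simp only [sum_const, Nat.card_Icc, Nat.add_sub_cancel, nsmul_eq_mul]
  field_simp

variable [IsFiniteMeasure μ]

lemma integrable_expCompensatedSum (hB : 0 < B)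
    (hadapted : ∀ m, 1 ≤ m → StronglyMeasurable[F m] (Δ m))
    (hbdd : ∀ m, 1 ≤ m → ∀ᵐ ω ∂μ, 0 ≤ Δ m ω ∧ Δ m ω ≤ B) (M : ℕ) :
    Integrable (expCompensatedSum μ F Δ B M) μ :=
  Integrable.of_bound
    (((stronglyAdapted_expCompensatedSum hadapted M).mono (F.le M)).aestronglyMeasurable)
    (Real.exp (M / 2)) <| by
      filter_upwards [ae_expCompensatedSum_le_exp hB hbdd M] with ω h
      rwa [Real.norm_eq_abs, abs_of_pos (expCompensatedSum_pos M ω)]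

theorem supermartingale_expCompensatedSum (hB : 0 < B)
    (hadapted : ∀ m, 1 ≤ m → StronglyMeasurable[F m] (Δ m))
    (hbdd : ∀ m, 1 ≤ m → ∀ᵐ ω ∂μ, 0 ≤ Δ m ω ∧ Δ m ω ≤ B) :
    Supermartingale (expCompensatedSum μ F Δ B) F μ := by
  refine supermartingale_nat (stronglyAdapted_expCompensatedSum hadapted)
    (integrable_expCompensatedSum hB hadapted hbdd) fun M => ?_
  set g := fun ω => expCompensatedSum μ F Δ B M ω * Real.exp (μ[Δ (M + 1) | F M] ω / (2 * B))
  set h := fun ω => Real.exp (-(Δ (M + 1) ω / B))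
  have hsplit : expCompensatedSum μ F Δ B (M + 1) = g * h := funext (expCompensatedSum_succ M)
  have hg : StronglyMeasurable[F M] g := (stronglyAdapted_expCompensatedSum hadapted M).mul
    ((Real.continuous_exp.comp (continuous_id.div_const _)).comp_stronglyMeasurable
      stronglyMeasurable_condExp)
  have hΔ : AEStronglyMeasurable (Δ (M + 1)) μ :=
    ((hadapted (M + 1) (by omega)).mono (F.le _)).aestronglyMeasurable
  have hh : Integrable h μ :=
    integrable_exp_neg_div hB.le hΔ ((hbdd (M + 1) (by omega)).mono fun _ h => h.1)
  rw [hsplit]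
  filter_upwards [condExp_mul_of_stronglyMeasurable_left hg
      (hsplit ▸ integrable_expCompensatedSum hB hadapted hbdd (M + 1)) hh,
    condExp_exp_neg_div_le hB (F.le M) hΔ (hbdd (M + 1) (by omega))] with ω hpull hstep
  rw [hpull, Pi.mul_apply]
  calc g ω * μ[h | F M] ω
      ≤ g ω * Real.exp (-(μ[Δ (M + 1) | F M] ω / (2 * B))) :=
        mul_le_mul_of_nonneg_left hstep (mul_pos (expCompensatedSum_pos M ω) (Real.exp_pos _)).le
    _ = expCompensatedSum μ F Δ B M ω := by
        simp only [g, mul_assoc, ← Real.exp_add, add_neg_cancel, Real.exp_zero, mul_one]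

end CompensatedSum

/-- Concentration of the sum of conditional means (cf. Kirschner & Krause, Lemma 3): for an
adapted sequence `Δ_m` with `0 ≤ Δ_m ≤ B` a.s. (`B ≥ 1`), with probability at least `1 − δ`,
simultaneously for all `M ≥ 1`,
`Σ_{m=1}^M E[Δ_m | F_{m−1}] ≤ 2 Σ_{m=1}^M Δ_m + 4B log(1/δ) + 8B log(4B) + 1`. -/
theorem sum_condexp_le {Ω : Type*} {m0 : MeasurableSpace Ω}
    (μ : Measure Ω) [IsProbabilityMeasure μ]
    (F : Filtration ℕ m0)
    (Δ : ℕ → Ω → ℝ) (B : ℝ) (hB : 1 ≤ B)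
    (hadapted : ∀ m, 1 ≤ m → StronglyMeasurable[F m] (Δ m))
    (hbdd : ∀ m, 1 ≤ m → ∀ᵐ ω ∂μ, 0 ≤ Δ m ω ∧ Δ m ω ≤ B)
    (δ : ℝ) (hδ : δ ∈ Set.Ioo (0 : ℝ) 1) :
    ENNReal.ofReal (1 - δ) ≤
      μ {ω | ∀ M : ℕ, 1 ≤ M →
        ∑ m ∈ Finset.Icc 1 M, (μ[Δ m | F (m - 1)]) ω ≤
          2 * ∑ m ∈ Finset.Icc 1 M, Δ m ω
            + 4 * B * Real.log (1 / δ) + 8 * B * Real.log (4 * B) + 1} := by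
  obtain ⟨hδ0, hδ1⟩ := hδ
  have hB0 : 0 < B := by linarith
  set bad := {ω | ∃ M, δ⁻¹ ≤ expCompensatedSum μ F Δ B M ω}
  have hbad : μ bad ≤ ENNReal.ofReal δ := by
    have hville :=
      (supermartingale_expCompensatedSum hB0 hadapted hbdd).mul_measure_exists_le_le_integral
        (fun M ω => (expCompensatedSum_pos M ω).le) (inv_pos.2 hδ0).le
    rw [expCompensatedSum_zero, ENNReal.ofReal_inv_of_pos hδ0] at hville
    rw [← inv_inv (ENNReal.ofReal δ), ENNReal.le_inv_iff_mul_le, mul_comm]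
    simpa using hville
  calc ENNReal.ofReal (1 - δ) = 1 - ENNReal.ofReal δ := by
        rw [ENNReal.ofReal_sub 1 hδ0.le, ENNReal.ofReal_one]
    _ ≤ 1 - μ bad := tsub_le_tsub_left hbad 1
    _ ≤ μ badᶜ := tsub_le_iff_right.2 <| by
        rw [add_comm, ← measure_univ (μ := μ)]
        exact measure_univ_le_add_compl bad
    _ ≤ _ := measure_mono ?_
  intro ω hω M _
  have hsum := sum_condExp_lt_of_expCompensatedSum_lt hB0 (inv_pos.2 hδ0)
    (not_le.1 fun h => hω ⟨M, h⟩)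
  have hlog_δ : 0 < Real.log (1 / δ) :=
    Real.log_pos (one_div δ ▸ one_lt_inv_iff₀.2 ⟨hδ0, hδ1⟩)
  have hlog_B : 0 ≤ Real.log (4 * B) := Real.log_nonneg (by linarith)
  rw [← one_div] at hsum
  linarith [mul_pos hB0 hlog_δ, mul_nonneg hB0.le hlog_B]
end

section
/- Lower bound for the transport cost in a tree metric: for a finite rooted tree with vertex weights w, for all z, z′ ∈ K_T and every coupling ζ of l(z) and l(z′), it holds that Σ_{a, b ∈ L} ζ(a, b) · d_T(a, b) ≥ Σ_{v ∈ V} w_v · |z_v − z′_v|. -/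
open Classical Finset

/-- The children of a vertex `u` in a rooted tree with root `r` and parent map `par`. -/
noncomputable def children {V : Type*} [Fintype V] (r : V) (par : V → V) (u : V) : Finset V :=
  Finset.univ.filter (fun v => v ≠ r ∧ par v = u)

/-- A vertex is a leaf if it has no children. -/
def IsLeaf {V : Type*} [Fintype V] (r : V) (par : V → V) (v : V) : Prop :=
  children r par v = ∅

/-- The set of leaves of the tree. -/
noncomputable def leaves {V : Type*} [Fintype V] (r : V) (par : V → V) : Finset V :=
  Finset.univ.filter (fun v => IsLeaf r par v)

/-- The leaves below a vertex `v`: leaves `l` with `par^[n] l = v` for some `n ≥ 0`. -/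
noncomputable def leavesBelow {V : Type*} [Fintype V] (r : V) (par : V → V) (v : V) :
    Finset V :=
  (leaves r par).filter (fun l => ∃ n : ℕ, par^[n] l = v)

/-- The tree distance between leaves `a, b`:
`d_T(a,b) = Σ_v w_v · |1[a ∈ L(v)] − 1[b ∈ L(v)]|`. -/
noncomputable def treeDist {V : Type*} [Fintype V] (r : V) (par : V → V) (w : V → ℝ)
    (a b : V) : ℝ :=
  ∑ v : V, w v * |(if a ∈ leavesBelow r par v then (1 : ℝ) else 0)
    - (if b ∈ leavesBelow r par v then (1 : ℝ) else 0)|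

section Aux

variable {V : Type*} [Fintype V] {r : V} {par : V → V}

/-- Descendants of a vertex. -/
noncomputable def descSet (r : V) (par : V → V) (v : V) : Finset V :=
  Finset.univ.filter (fun u => ∃ n : ℕ, par^[n] u = v)

lemma mem_children' {c u : V} : c ∈ children r par u ↔ c ≠ r ∧ par c = u := by
  simp [children]

lemma mem_descSet' {u v : V} : u ∈ descSet r par v ↔ ∃ n : ℕ, par^[n] u = v := by
  simp [descSet]

lemma mem_leavesBelow' {l v : V} :
    l ∈ leavesBelow r par v ↔ l ∈ leaves r par ∧ ∃ n : ℕ, par^[n] l = v := by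
  simp [leavesBelow]

omit [Fintype V] in
lemma no_cycle (hroot : par r = r) (hreach : ∀ v : V, ∃ n : ℕ, par^[n] v = r)
    {x : V} {k : ℕ} (hk : 0 < k) (hx : par^[k] x = x) : x = r := by
  obtain ⟨m, hm⟩ := hreach x
  rcases Nat.eq_zero_or_pos m with h0 | hmpos
  · simpa [h0] using hm
  obtain ⟨k', rfl⟩ : ∃ k', k = k' + 1 := ⟨k - 1, by omega⟩
  have h1 : par^[(k' + 1) * m] x = x := by
    rw [Function.iterate_mul]
    exact Function.iterate_fixed hx m
  have h2 : par^[(k' + 1) * m] x = r := by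
    have he : (k' + 1) * m = k' * m + m := by ring
    rw [he, Function.iterate_add_apply, hm]
    exact Function.iterate_fixed hroot _
  rw [h1] at h2; exact h2

lemma child_card_lt (hroot : par r = r) (hreach : ∀ v : V, ∃ n : ℕ, par^[n] v = r)
    {c v : V} (hc : c ∈ children r par v) :
    (descSet r par c).card < (descSet r par v).card := by
  obtain ⟨hcr, hpc⟩ := mem_children'.mp hc
  apply Finset.card_lt_card
  constructor
  · intro u hu
    obtain ⟨n, hn⟩ := mem_descSet'.mp hu
    exact mem_descSet'.mpr ⟨n + 1, by rw [Function.iterate_succ_apply', hn, hpc]⟩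
  · intro hsub
    have hv : v ∈ descSet r par v := mem_descSet'.mpr ⟨0, rfl⟩
    obtain ⟨n, hn⟩ := mem_descSet'.mp (hsub hv)
    have : par^[n + 1] c = c := by rw [Function.iterate_succ_apply, hpc, hn]
    exact hcr (no_cycle hroot hreach (Nat.succ_pos n) this)

/-- If `l` is strictly below `v`, it is below some child of `v`. -/
lemma step_to_child (hroot : par r = r) {l v : V} (hlv : l ≠ v)
    (h : ∃ n : ℕ, par^[n] l = v) :
    ∃ c ∈ children r par v, ∃ m : ℕ, par^[m] l = c := by
  classical
  set n := Nat.find h with hndef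
  have hn : par^[n] l = v := Nat.find_spec h
  have hnpos : 0 < n := by
    rcases Nat.eq_zero_or_pos n with h0 | h0
    · exact absurd (by simpa [h0] using hn) hlv
    · exact h0
  obtain ⟨m, hnm⟩ : ∃ m, n = m + 1 := ⟨n - 1, by omega⟩
  set c := par^[m] l with hcdef
  have hpc : par c = v := by
    rw [hcdef, ← Function.iterate_succ_apply' par m l]
    rw [hnm] at hn; exact hn
  have hcr : c ≠ r := by
    intro hc
    have hvr : v = r := by rw [← hpc, hc, hroot]
    rcases Nat.eq_zero_or_pos m with h0 | h0
    · apply hlv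
      have hlc : l = c := by rw [hcdef, h0, Function.iterate_zero_apply]
      rw [hlc, hc, hvr]
    · have hm' : par^[m] l = v := by rw [← hcdef, hc, hvr]
      exact absurd hm' (Nat.find_min h (by omega))
  exact ⟨c, mem_children'.mpr ⟨hcr, hpc⟩, m, rfl⟩

lemma leavesBelow_of_leaf (hroot : par r = r) {v : V} (hv : IsLeaf r par v) :
    leavesBelow r par v = {v} := by
  have hvl : v ∈ leaves r par := by simp [leaves, hv]
  ext l
  simp only [Finset.mem_singleton, mem_leavesBelow']
  constructor
  · rintro ⟨hl, hex⟩
    by_contra hlv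
    obtain ⟨c, hc, _⟩ := step_to_child hroot hlv hex
    rw [IsLeaf] at hv
    simp [hv] at hc
  · rintro rfl
    exact ⟨hvl, 0, rfl⟩

lemma leavesBelow_biUnion (hroot : par r = r) {v : V} (hv : ¬ IsLeaf r par v) :
    leavesBelow r par v = (children r par v).biUnion (leavesBelow r par) := by
  ext l
  simp only [Finset.mem_biUnion, mem_leavesBelow']
  constructor
  · rintro ⟨hl, hex⟩
    have hlv : l ≠ v := by
      rintro rfl
      exact hv (by simpa [leaves] using hl)
    obtain ⟨c, hc, m, hm⟩ := step_to_child hroot hlv hex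
    exact ⟨c, hc, hl, m, hm⟩
  · rintro ⟨c, hc, hl, m, hm⟩
    obtain ⟨hcr, hpc⟩ := mem_children'.mp hc
    exact ⟨hl, m + 1, by rw [Function.iterate_succ_apply', hm, hpc]⟩

lemma leavesBelow_disjoint (hroot : par r = r) (hreach : ∀ v : V, ∃ n : ℕ, par^[n] v = r)
    {v c c' : V} (hc : c ∈ children r par v) (hc' : c' ∈ children r par v) (hne : c ≠ c') :
    Disjoint (leavesBelow r par c) (leavesBelow r par c') := by
  have aux : ∀ c c' : V, c ∈ children r par v → c' ∈ children r par v →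
      ∀ n m : ℕ, n ≤ m → ∀ l : V, par^[n] l = c → par^[m] l = c' → c = c' := by
    intro c c' hc hc' n m hnm l hn hm
    obtain ⟨hcr, hpc⟩ := mem_children'.mp hc
    obtain ⟨hcr', hpc'⟩ := mem_children'.mp hc'
    have hk : par^[m - n] c = c' := by
      rw [← hn, ← Function.iterate_add_apply]
      rw [Nat.sub_add_cancel hnm, hm]
    rcases Nat.eq_zero_or_pos (m - n) with h0 | h0
    · rw [h0, Function.iterate_zero_apply] at hk; exact hk
    · exfalso
      obtain ⟨k, hkk⟩ : ∃ k, m - n = k + 1 := ⟨m - n - 1, by omega⟩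
      have hcv : c' = par^[k] v := by
        rw [← hk, hkk, Function.iterate_succ_apply, hpc]
      have hcyc : par^[k + 1] v = v := by
        rw [Function.iterate_succ_apply', ← hcv, hpc']
      have hvr : v = r := no_cycle hroot hreach (Nat.succ_pos k) hcyc
      apply hcr'
      rw [hcv, hvr]
      exact Function.iterate_fixed hroot k
  rw [Finset.disjoint_left]
  intro l hl hl'
  obtain ⟨_, n, hn⟩ := mem_leavesBelow'.mp hl
  obtain ⟨_, m, hm⟩ := mem_leavesBelow'.mp hl'
  rcases le_total n m with h | h
  · exact hne (aux c c' hc hc' n m h l hn hm)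
  · exact hne (aux c' c hc' hc m n h l hm hn).symm

lemma sum_leavesBelow (hroot : par r = r) (hreach : ∀ v : V, ∃ n : ℕ, par^[n] v = r)
    (z : V → ℝ)
    (hz3 : ∀ u, ¬ IsLeaf r par u → z u = ∑ v ∈ children r par u, z v) :
    ∀ v, z v = ∑ l ∈ leavesBelow r par v, z l := by
  have H : ∀ N : ℕ, ∀ v, (descSet r par v).card ≤ N →
      z v = ∑ l ∈ leavesBelow r par v, z l := by
    intro N
    induction N with
    | zero =>
      intro v hv
      exfalso
      have hmem : v ∈ descSet r par v := mem_descSet'.mpr ⟨0, rfl⟩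
      have := Finset.card_pos.mpr ⟨v, hmem⟩
      omega
    | succ N ih =>
      intro v hv
      by_cases hvl : IsLeaf r par v
      · rw [leavesBelow_of_leaf hroot hvl, Finset.sum_singleton]
      · rw [hz3 v hvl, leavesBelow_biUnion hroot hvl]
        rw [Finset.sum_biUnion]
        · refine Finset.sum_congr rfl fun c hc => ?_
          exact ih c (by have := child_card_lt hroot hreach hc; omega)
        · intro c hc c' hc' hne
          exact leavesBelow_disjoint hroot hreach hc hc' hne
  exact fun v => H _ v le_rfl

end Aux

/-- Lower bound for the transport cost in a tree metric: for `z, z′ ∈ K_T` and every coupling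
`ζ` of the induced leaf distributions, `Σ_{a,b} ζ(a,b) d_T(a,b) ≥ Σ_v w_v |z_v − z′_v|`. -/
theorem transport_cost_ge_weighted_l1 {V : Type*} [Fintype V]
    (r : V) (par : V → V)
    (hroot : par r = r)
    (hreach : ∀ v : V, ∃ n : ℕ, par^[n] v = r)
    (w : V → ℝ) (hw : ∀ v, 0 ≤ w v)
    (z z' : V → ℝ)
    (hz : (∀ v, 0 ≤ z v) ∧ z r = 1 ∧
      ∀ u, ¬ IsLeaf r par u → z u = ∑ v ∈ children r par u, z v)
    (hz' : (∀ v, 0 ≤ z' v) ∧ z' r = 1 ∧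
      ∀ u, ¬ IsLeaf r par u → z' u = ∑ v ∈ children r par u, z' v)
    (ζ : V → V → ℝ)
    (hζ0 : ∀ a ∈ leaves r par, ∀ b ∈ leaves r par, 0 ≤ ζ a b)
    (hζ1 : ∀ a ∈ leaves r par, ∑ b ∈ leaves r par, ζ a b = z a)
    (hζ2 : ∀ b ∈ leaves r par, ∑ a ∈ leaves r par, ζ a b = z' b) :
    ∑ v : V, w v * |z v - z' v|
      ≤ ∑ a ∈ leaves r par, ∑ b ∈ leaves r par, ζ a b * treeDist r par w a b := by
  classical
  obtain ⟨hz0, hz1, hz3⟩ := hz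
  obtain ⟨hz0', hz1', hz3'⟩ := hz'
  set L := leaves r par with hL
  set χ : V → V → ℝ := fun v a => if a ∈ leavesBelow r par v then (1 : ℝ) else 0 with hχ
  have hind : ∀ (y : V → ℝ),
      (∀ u, ¬ IsLeaf r par u → y u = ∑ v ∈ children r par u, y v) →
      ∀ v, y v = ∑ a ∈ L, χ v a * y a := by
    intro y hy3 v
    rw [sum_leavesBelow hroot hreach y hy3 v,
      show leavesBelow r par v = L.filter (fun l => ∃ n : ℕ, par^[n] l = v) from rfl,
      Finset.sum_filter]
    refine Finset.sum_congr rfl fun a ha => ?_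
    by_cases h : ∃ n : ℕ, par^[n] a = v
    · simp [hχ, mem_leavesBelow', h, show a ∈ leaves r par from ha]
    · simp [hχ, mem_leavesBelow', h]
  have hsum := hind z hz3
  have hsum' := hind z' hz3'
  have key : ∀ v, z v - z' v = ∑ a ∈ L, ∑ b ∈ L, ζ a b * (χ v a - χ v b) := by
    intro v
    have h1 : ∑ a ∈ L, ∑ b ∈ L, ζ a b * χ v a = z v := by
      rw [hsum v]
      refine Finset.sum_congr rfl fun a ha => ?_
      rw [← Finset.sum_mul, hζ1 a ha]
      ring
    have h2 : ∑ a ∈ L, ∑ b ∈ L, ζ a b * χ v b = z' v := by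
      rw [Finset.sum_comm, hsum' v]
      refine Finset.sum_congr rfl fun b hb => ?_
      rw [← Finset.sum_mul, hζ2 b hb]
      ring
    calc z v - z' v
        = (∑ a ∈ L, ∑ b ∈ L, ζ a b * χ v a) - ∑ a ∈ L, ∑ b ∈ L, ζ a b * χ v b := by
          rw [h1, h2]
      _ = ∑ a ∈ L, ∑ b ∈ L, ζ a b * (χ v a - χ v b) := by
          rw [← Finset.sum_sub_distrib]
          refine Finset.sum_congr rfl fun a _ => ?_
          rw [← Finset.sum_sub_distrib]
          exact Finset.sum_congr rfl fun b _ => by ring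
  have hbound : ∀ v, |z v - z' v| ≤ ∑ a ∈ L, ∑ b ∈ L, ζ a b * |χ v a - χ v b| := by
    intro v
    rw [key v]
    refine (Finset.abs_sum_le_sum_abs _ _).trans (Finset.sum_le_sum fun a ha => ?_)
    refine (Finset.abs_sum_le_sum_abs _ _).trans (Finset.sum_le_sum fun b hb => ?_)
    rw [abs_mul, abs_of_nonneg (hζ0 a ha b hb)]
  calc ∑ v : V, w v * |z v - z' v|
      ≤ ∑ v : V, w v * ∑ a ∈ L, ∑ b ∈ L, ζ a b * |χ v a - χ v b| :=
        Finset.sum_le_sum fun v _ => mul_le_mul_of_nonneg_left (hbound v) (hw v)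
    _ = ∑ a ∈ L, ∑ b ∈ L, ζ a b * treeDist r par w a b := by
        simp only [Finset.mul_sum, treeDist]
        rw [Finset.sum_comm]
        refine Finset.sum_congr rfl fun a ha => ?_
        rw [Finset.sum_comm]
        refine Finset.sum_congr rfl fun b hb => ?_
        refine Finset.sum_congr rfl fun v _ => ?_
        simp only [hχ]
        ring
end
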